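/- Let (Ω, 𝔽, ℙ) be a probability space, let a ∈ ℝ^N be a fixed unit vector, and let u : Ω → ℝ^N be a random vector with ‖u‖ = 1 almost surely, E[⟪a, u⟫] = 0, and E[⟪a, u⟫²] ≤ 1/N. Let t ∈ ℝ satisfy 0 ≤ t ≤ (3 − √3)/6. Then E[ 1 / ‖(1 − t) a + t u‖² ] ≤ (1/((1 − t)² + t²)) · (1 + 8 t² (1 − t)² / (N ((1 − t)² + t²)²)). -/
import Mathlib


open MeasureTheory
open scoped RealInnerProductSpace

set_option maxHeartbeats 1000000 in
/-- Bound on the expected inverse squared norm of the residual interpolation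
`(1 − t) a + t u` of a fixed unit vector `a` and a random unit vector `u` with
`E⟪a,u⟫ = 0` and `E⟪a,u⟫² ≤ 1/N`, for `0 ≤ t ≤ (3 − √3)/6`. -/
theorem expectation_inv_sq_norm_lerp_le {Ω : Type*} [MeasurableSpace Ω]
    (P : Measure Ω) [IsProbabilityMeasure P] {N : ℕ}
    (a : EuclideanSpace ℝ (Fin N)) (ha : ‖a‖ = 1)
    (u : Ω → EuclideanSpace ℝ (Fin N)) (hu : ∀ᵐ ω ∂P, ‖u ω‖ = 1)
    (t : ℝ) (ht0 : 0 ≤ t) (ht1 : t ≤ (3 - Real.sqrt 3) / 6)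
    (hint1 : Integrable (fun ω => ⟪a, u ω⟫) P)
    (hint2 : Integrable (fun ω => ⟪a, u ω⟫ ^ 2) P)
    (hint3 : Integrable (fun ω => 1 / ‖(1 - t) • a + t • u ω‖ ^ 2) P)
    (hmean : ∫ ω, ⟪a, u ω⟫ ∂P = 0)
    (hvar : ∫ ω, ⟪a, u ω⟫ ^ 2 ∂P ≤ 1 / (N : ℝ)) :
    ∫ ω, 1 / ‖(1 - t) • a + t • u ω‖ ^ 2 ∂P ≤
      (1 / ((1 - t) ^ 2 + t ^ 2)) *
        (1 + 8 * t ^ 2 * (1 - t) ^ 2 / ((N : ℝ) * ((1 - t) ^ 2 + t ^ 2) ^ 2)) := by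
  -- N = 0 is impossible since ‖a‖ = 1
  rcases Nat.eq_zero_or_pos N with hN | hN
  · subst hN
    have : a = 0 := Subsingleton.elim a 0
    rw [this] at ha
    simp at ha
  have hNpos : (0 : ℝ) < N := by exact_mod_cast hN
  -- basic bounds on t
  have hs3 : Real.sqrt 3 ^ 2 = 3 := Real.sq_sqrt (by norm_num)
  have hs3' : (1 : ℝ) ≤ Real.sqrt 3 := by
    nlinarith [Real.sqrt_nonneg 3]
  have ht13 : t ≤ 1 / 3 := by linarith
  set c : ℝ := (1 - t) ^ 2 + t ^ 2 with hcdef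
  set b : ℝ := 2 * t * (1 - t) with hbdef
  clear_value c b
  have hc : 0 < c := by nlinarith
  have hb : 0 ≤ b := by nlinarith
  have h2bc : 2 * b ≤ c := by nlinarith [Real.sqrt_nonneg 3]
  set g : Ω → ℝ := fun ω =>
    1 / c - (b / c ^ 2) * ⟪a, u ω⟫ + (2 * b ^ 2 / c ^ 3) * ⟪a, u ω⟫ ^ 2 with hgdef
  have hg : Integrable g P := by
    exact (((integrable_const (1 / c)).sub (hint1.const_mul _)).add (hint2.const_mul _))
  have hle : ∀ᵐ ω ∂P, 1 / ‖(1 - t) • a + t • u ω‖ ^ 2 ≤ g ω := by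
    filter_upwards [hu] with ω hω
    set x : ℝ := ⟪a, u ω⟫ with hxdef
    have hx : |x| ≤ 1 := by
      have := abs_real_inner_le_norm a (u ω)
      rw [ha, hω] at this; simpa using this
    have hnorm : ‖(1 - t) • a + t • u ω‖ ^ 2 = c + b * x := by
      rw [norm_add_sq_real, real_inner_smul_left, real_inner_smul_right,
        norm_smul, norm_smul, ha, hω]
      simp only [Real.norm_eq_abs, mul_one]
      rw [sq_abs, sq_abs, hcdef, hbdef, hxdef]
      ring
    have hx1 : -1 ≤ x := neg_le_of_abs_le hx
    have hpos : 0 < c + b * x := by nlinarith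
    have hcb : 0 ≤ c + 2 * b * x := by nlinarith
    rw [hnorm, hgdef]
    simp only [← hxdef]
    rw [div_le_iff₀ hpos]
    have expand : (1 / c - b / c ^ 2 * x + 2 * b ^ 2 / c ^ 3 * x ^ 2) * (c + b * x)
        = 1 + b ^ 2 * x ^ 2 * (c + 2 * b * x) / c ^ 3 := by
      field_simp; ring
    rw [expand]
    have h1 : 0 ≤ b ^ 2 * x ^ 2 * (c + 2 * b * x) / c ^ 3 :=
      div_nonneg (mul_nonneg (by positivity) hcb) (by positivity)
    linarith
  have hmono := integral_mono_ae hint3 hg hle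
  have hgint : ∫ ω, g ω ∂P = 1 / c + (2 * b ^ 2 / c ^ 3) * ∫ ω, ⟪a, u ω⟫ ^ 2 ∂P := by
    have heq : (fun ω => g ω) = fun ω =>
        (1 / c - (b / c ^ 2) * ⟪a, u ω⟫) + (2 * b ^ 2 / c ^ 3) * ⟪a, u ω⟫ ^ 2 := by
      rw [hgdef]
    rw [heq]
    have i1 : Integrable (fun ω => 1 / c - (b / c ^ 2) * ⟪a, u ω⟫) P :=
      (integrable_const _).sub (hint1.const_mul _)
    have i2 : Integrable (fun ω => (2 * b ^ 2 / c ^ 3) * ⟪a, u ω⟫ ^ 2) P :=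
      hint2.const_mul _
    rw [integral_add i1 i2,
      integral_sub (integrable_const (1 / c)) (hint1.const_mul _),
      integral_const_mul, integral_const_mul, integral_const, hmean]
    simp
  have hvar' : (2 * b ^ 2 / c ^ 3) * (∫ ω, ⟪a, u ω⟫ ^ 2 ∂P) ≤ (2 * b ^ 2 / c ^ 3) * (1 / N) :=
    mul_le_mul_of_nonneg_left hvar (by positivity)
  have hfin : 1 / c + (2 * b ^ 2 / c ^ 3) * (1 / N)
      = (1 / c) * (1 + 8 * t ^ 2 * (1 - t) ^ 2 / ((N : ℝ) * c ^ 2)) := by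
    rw [hbdef, hcdef]
    have h0 : ((1 - t) ^ 2 + t ^ 2) ≠ 0 := by rw [← hcdef]; positivity
    have hN0 : (N : ℝ) ≠ 0 := ne_of_gt hNpos
    field_simp
    ring
  calc ∫ ω, 1 / ‖(1 - t) • a + t • u ω‖ ^ 2 ∂P ≤ ∫ ω, g ω ∂P := hmono
    _ ≤ 1 / c + (2 * b ^ 2 / c ^ 3) * (1 / N) := by rw [hgint]; linarith
    _ = _ := hfin
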